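/- Let q ≥ 1, Γ ∈ 𝓕_i(a_1,…,a_q; b_1,…,b_q), suppose a_q − 1 is not a source of Γ, and let L_3(Γ) be the graph obtained from Γ by replacing its unique edge of the form (a_q, t) by (a_q − 1, t). If L_3(Γ) is not a flow (equivalently, a_q − 1 is a transit point of Γ), then there exists exactly one flow Γ' ∈ 𝓕_i(a_1,…,a_q; b_1,…,b_q) distinct from Γ such that L_3(Γ) = L_3(Γ'), and moreover sgn_i(Γ) = −sgn_i(Γ'). -/

import Mathlib

open Finset

/-- A "flow graph" is a finite set of directed edges with integer vertices. -/
abbrev FlowGraph : Type := Finset (ℤ × ℤ)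

/-- The edges of `E` beginning at `r`. -/
def beginsAt (E : FlowGraph) (r : ℤ) : Finset (ℤ × ℤ) := E.filter (fun e => e.1 = r)

/-- The edges of `E` ending at `r`. -/
def endsAt (E : FlowGraph) (r : ℤ) : Finset (ℤ × ℤ) := E.filter (fun e => e.2 = r)

/-- `E` is a flow with set of sources `A` and set of sinks `B`:
every edge `(s,t)` has `s < t`; the sources and sinks are pairwise distinct;
exactly one edge begins at each source (and none ends there); exactly one edge
ends at each sink (and none begins there); and every other vertex either meets
no edge, or exactly one edge ends at it and exactly one edge begins at it
(such a vertex is a transit point). -/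
structure IsFlow (E : FlowGraph) (A B : Finset ℤ) : Prop where
  edge_lt : ∀ e ∈ E, e.1 < e.2
  disjAB : Disjoint A B
  source_out : ∀ a ∈ A, (beginsAt E a).card = 1
  source_in : ∀ a ∈ A, endsAt E a = ∅
  sink_in : ∀ b ∈ B, (endsAt E b).card = 1
  sink_out : ∀ b ∈ B, beginsAt E b = ∅
  transit : ∀ r : ℤ, r ∉ A → r ∉ B →
      (beginsAt E r = ∅ ∧ endsAt E r = ∅) ∨
      ((beginsAt E r).card = 1 ∧ (endsAt E r).card = 1)

/-- The set of transit points of the flow `E` with sources `A` and sinks `B`: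
the vertices meeting some edge which are neither sources nor sinks. -/
def transitSet (E : FlowGraph) (A B : Finset ℤ) : Finset ℤ :=
  ((E.image Prod.fst) ∪ (E.image Prod.snd)) \ (A ∪ B)

def IsTransitPoint (E : FlowGraph) (A B : Finset ℤ) (r : ℤ) : Prop :=
  r ∈ transitSet E A B

/-- Two vertices are linked if they lie in the same connected component of `E`. -/
def Linked (E : FlowGraph) (x y : ℤ) : Prop :=
  Relation.ReflTransGen (fun u v => (u, v) ∈ E ∨ (v, u) ∈ E) x y

/-- The finset of values of a family of integers. -/
def srcSet {q : ℕ} (a : Fin q → ℤ) : Finset ℤ := Finset.image a Finset.univ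

/-- Membership in `𝓕_i(a_1,…,a_q; b_1,…,b_q)` : a flow with sources the `a j`,
sinks the `b j`, and no transit point greater than `i`. -/
def InF {q : ℕ} (i : ℤ) (a b : Fin q → ℤ) (E : FlowGraph) : Prop :=
  IsFlow E (srcSet a) (srcSet b) ∧
  ∀ r : ℤ, IsTransitPoint E (srcSet a) (srcSet b) r → r ≤ i

/-- `σ` is the linking permutation: the source `a j` is linked to the sink `b (σ j)`. -/
def IsLinkingPerm {q : ℕ} (E : FlowGraph) (a b : Fin q → ℤ) (σ : Equiv.Perm (Fin q)) : Prop :=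
  ∀ j : Fin q, Linked E (a j) (b (σ j))

/-- The `i`-sign of a flow `E` (with sources `A`, sinks given by the family `b` and
sinks-set `B`), computed from a linking permutation `σ`:
`sgn σ * (-1) ^ (Σ_j (b_j - i) + #transit points)`. -/
def signValue {q : ℕ} (i : ℤ) (b : Fin q → ℤ) (σ : Equiv.Perm (Fin q))
    (E : FlowGraph) (A B : Finset ℤ) : ℤ :=
  (Equiv.Perm.sign σ : ℤ) *
    (-1) ^ ((∑ j : Fin q, (b j - i)).toNat + (transitSet E A B).card)

/-- The operation `L_3` for the flow with last source `c`: replace the edge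
beginning at `c` by the edge with the same end beginning at `c - 1`. -/
def L3g (c : ℤ) (E : FlowGraph) : FlowGraph :=
  E.image (fun e => if e.1 = c then (c - 1, e.2) else e)

/-! Since `c - 1` (with `c = a_q`) is a transit point, it has an out-edge `(c - 1, u)` besides
the edge `(c, t)` leaving the source `c`. After `L_3` both edges leave `c - 1`, so a flow with the
same image is either `Γ` or the flow `Γ'` obtained by exchanging the heads `t` and `u`. The
exchange keeps all in- and out-degrees, hence the transit points, and it exchanges the sinks
reached from `c` and from the source whose path runs through `c - 1`: the linking permutations
differ by a transposition. -/

/-- The guard `x < e.2` only makes the recursion terminate; in a flow it always holds. -/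
noncomputable def pathEnd (F : FlowGraph) (x : ℤ) : ℤ :=
  if h : ∃ e ∈ F, e.1 = x ∧ x < e.2 then pathEnd F h.choose.2 else x
termination_by #(F.filter (x ≤ ·.1))
decreasing_by
  obtain ⟨he, hx, _⟩ := h.choose_spec
  apply Finset.card_lt_card
  refine (Finset.ssubset_iff_of_subset fun e he' => ?_).2 ⟨h.choose, ?_, ?_⟩
  · simp only [mem_filter] at he' ⊢; exact ⟨he'.1, by omega⟩
  · simp [he, hx]
  · simp; omega

section PathEnd

variable {F : FlowGraph} {e : ℤ × ℤ} {x y : ℤ}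

lemma mem_of_fst_eq (he : e ∈ F) (hx : e.1 = x) : (x, e.2) ∈ F := hx ▸ he

lemma pathEnd_of_not_exists (h : ¬∃ e ∈ F, e.1 = x ∧ x < e.2) : pathEnd F x = x := by
  rw [pathEnd, dif_neg h]

lemma pathEnd_of_notMem (h : ∀ y, (x, y) ∉ F) : pathEnd F x = x :=
  pathEnd_of_not_exists fun ⟨e, he, hx, _⟩ => h e.2 (mem_of_fst_eq he hx)

lemma pathEnd_eq_of_mem (hinj : Set.InjOn Prod.fst (F : Set (ℤ × ℤ))) (hxy : (x, y) ∈ F)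
    (hlt : x < y) : pathEnd F x = pathEnd F y := by
  have h : ∃ e ∈ F, e.1 = x ∧ x < e.2 := ⟨_, hxy, rfl, hlt⟩
  rw [pathEnd, dif_pos h, hinj h.choose_spec.1 hxy h.choose_spec.2.1]

lemma linked_pathEnd (F : FlowGraph) (x : ℤ) : Linked F x (pathEnd F x) := by
  induction x using pathEnd.induct F with
  | case1 x h ih =>
    obtain ⟨he, hx, -⟩ := h.choose_spec
    rw [pathEnd, dif_pos h]
    exact .head (Or.inl (mem_of_fst_eq he hx)) ih
  | case2 x h => rw [pathEnd_of_not_exists h]; exact .refl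

lemma Linked.mono {G : FlowGraph} (hFG : F ⊆ G) (h : Linked F x y) : Linked G x y :=
  Relation.ReflTransGen.mono (fun _ _ => Or.imp (fun h => hFG h) (fun h => hFG h)) _ _ h

lemma pathEnd_eq_of_linked (hinj : Set.InjOn Prod.fst (F : Set (ℤ × ℤ)))
    (hlt : ∀ e ∈ F, e.1 < e.2) (h : Linked F x y) : pathEnd F x = pathEnd F y := by
  induction h with
  | refl => rfl
  | tail _ hstep ih =>
    rcases hstep with h | h <;> rw [ih, pathEnd_eq_of_mem hinj h (hlt _ h)]

lemma pathEnd_erase_of_ne (hinj : Set.InjOn Prod.fst (F : Set (ℤ × ℤ))) (he : e ∈ F)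
    (h : pathEnd F x ≠ pathEnd F e.2) : pathEnd (F.erase e) x = pathEnd F x := by
  induction x using pathEnd.induct F with
  | case1 x hx ih =>
    obtain ⟨hf, hfx, hlt⟩ := hx.choose_spec
    have hstep : pathEnd F x = pathEnd F hx.choose.2 := by rw [pathEnd, dif_pos hx]
    have hne : (x, hx.choose.2) ≠ e := by rintro rfl; exact h hstep
    rw [pathEnd_eq_of_mem (hinj.mono (erase_subset _ _))
        (mem_erase.2 ⟨hne, mem_of_fst_eq hf hfx⟩) hlt,
      ih (hstep ▸ h), hstep]
  | case2 x hx =>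
    rw [pathEnd_of_not_exists hx, pathEnd_of_not_exists fun ⟨f, hf, hfx⟩ =>
      hx ⟨f, mem_of_mem_erase hf, hfx⟩]

lemma pathEnd_erase_of_lt (hinj : Set.InjOn Prod.fst (F : Set (ℤ × ℤ))) (he : e.1 < x) :
    pathEnd (F.erase e) x = pathEnd F x := by
  induction x using pathEnd.induct F with
  | case1 x hx ih =>
    obtain ⟨hf, hfx, hlt⟩ := hx.choose_spec
    have hstep : pathEnd F x = pathEnd F hx.choose.2 := by rw [pathEnd, dif_pos hx]
    have hne : (x, hx.choose.2) ≠ e := by rintro rfl; exact he.ne rfl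
    rw [pathEnd_eq_of_mem (hinj.mono (erase_subset _ _))
        (mem_erase.2 ⟨hne, mem_of_fst_eq hf hfx⟩) hlt,
      ih (by omega), hstep]
  | case2 x hx =>
    rw [pathEnd_of_not_exists hx, pathEnd_of_not_exists fun ⟨f, hf, hfx⟩ =>
      hx ⟨f, mem_of_mem_erase hf, hfx⟩]

end PathEnd

lemma mem_beginsAt {E : FlowGraph} {r : ℤ} {e : ℤ × ℤ} :
    e ∈ beginsAt E r ↔ e ∈ E ∧ e.1 = r :=
  mem_filter

lemma mem_endsAt {E : FlowGraph} {r : ℤ} {e : ℤ × ℤ} :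
    e ∈ endsAt E r ↔ e ∈ E ∧ e.2 = r :=
  mem_filter

namespace IsFlow

variable {E : FlowGraph} {A B : Finset ℤ} {r x x' y y' : ℤ}

lemma card_beginsAt_le_one (hE : IsFlow E A B) (r : ℤ) : #(beginsAt E r) ≤ 1 := by
  by_cases hA : r ∈ A
  · exact (hE.source_out r hA).le
  by_cases hB : r ∈ B
  · simp [hE.sink_out r hB]
  rcases hE.transit r hA hB with ⟨h, -⟩ | ⟨h, -⟩ <;> simp [h]

lemma card_endsAt_le_one (hE : IsFlow E A B) (r : ℤ) : #(endsAt E r) ≤ 1 := by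
  by_cases hB : r ∈ B
  · exact (hE.sink_in r hB).le
  by_cases hA : r ∈ A
  · simp [hE.source_in r hA]
  rcases hE.transit r hA hB with ⟨-, h⟩ | ⟨-, h⟩ <;> simp [h]

lemma injOn_fst (hE : IsFlow E A B) : Set.InjOn Prod.fst (E : Set (ℤ × ℤ)) :=
  fun e he e' he' h => card_le_one.1 (hE.card_beginsAt_le_one e.1) e (mem_beginsAt.2 ⟨he, rfl⟩)
    e' (mem_beginsAt.2 ⟨he', h.symm⟩)

lemma injOn_snd (hE : IsFlow E A B) : Set.InjOn Prod.snd (E : Set (ℤ × ℤ)) :=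
  fun e he e' he' h => card_le_one.1 (hE.card_endsAt_le_one e.2) e (mem_endsAt.2 ⟨he, rfl⟩)
    e' (mem_endsAt.2 ⟨he', h.symm⟩)

lemma mem_fst_iff (hE : IsFlow E A B) (h : (x, y) ∈ E) : (x, y') ∈ E ↔ y' = y :=
  ⟨fun h' => congrArg Prod.snd (hE.injOn_fst h' h rfl), by rintro rfl; exact h⟩

lemma mem_snd_iff (hE : IsFlow E A B) (h : (x, y) ∈ E) : (x', y) ∈ E ↔ x' = x :=
  ⟨fun h' => congrArg Prod.fst (hE.injOn_snd h' h rfl), by rintro rfl; exact h⟩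

lemma card_endsAt_eq_one (hE : IsFlow E A B) (h : (x, y) ∈ E) : #(endsAt E y) = 1 :=
  (hE.card_endsAt_le_one y).antisymm (card_pos.2 ⟨_, mem_endsAt.2 ⟨h, rfl⟩⟩)

lemma exists_mem_of_mem_sources (hE : IsFlow E A B) (hr : r ∈ A) : ∃ y, (r, y) ∈ E := by
  obtain ⟨e, he⟩ := card_pos.1 (hE.source_out r hr).ge
  obtain ⟨he', rfl⟩ := mem_beginsAt.1 he
  exact ⟨e.2, he'⟩

lemma notMem_of_mem_sources (hE : IsFlow E A B) (hr : r ∈ A) : (x, r) ∉ E := fun h => by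
  simpa [hE.source_in r hr] using mem_endsAt.2 ⟨h, rfl⟩

lemma notMem_of_mem_sinks (hE : IsFlow E A B) (hr : r ∈ B) : (r, y) ∉ E := fun h => by
  simpa [hE.sink_out r hr] using mem_beginsAt.2 ⟨h, rfl⟩

lemma exists_mem_of_notMem_sources (hE : IsFlow E A B) (hA : r ∉ A) (h : (r, y) ∈ E) :
    ∃ x, (x, r) ∈ E := by
  have hB : r ∉ B := fun hB => hE.notMem_of_mem_sinks hB h
  rcases hE.transit r hA hB with ⟨hbeg, -⟩ | ⟨-, hend⟩
  · simpa [hbeg] using mem_beginsAt.2 ⟨h, rfl⟩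
  · obtain ⟨e, he⟩ := card_pos.1 hend.ge
    obtain ⟨he', rfl⟩ := mem_endsAt.1 he
    exact ⟨e.1, he'⟩

lemma exists_mem_of_notMem_sinks (hE : IsFlow E A B) (hB : r ∉ B) (h : (x, r) ∈ E) :
    ∃ y, (r, y) ∈ E := by
  have hA : r ∉ A := fun hA => hE.notMem_of_mem_sources hA h
  rcases hE.transit r hA hB with ⟨-, hend⟩ | ⟨hbeg, -⟩
  · simpa [hend] using mem_endsAt.2 ⟨h, rfl⟩
  · obtain ⟨e, he⟩ := card_pos.1 hbeg.ge
    obtain ⟨he', rfl⟩ := mem_beginsAt.1 he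
    exact ⟨e.2, he'⟩

lemma exists_mem_of_mem_transitSet (hE : IsFlow E A B) (hr : r ∈ transitSet E A B) :
    (∃ x, (x, r) ∈ E) ∧ ∃ y, (r, y) ∈ E := by
  simp only [transitSet, mem_sdiff, mem_union, mem_image, not_or] at hr
  obtain ⟨⟨⟨x, y⟩, h, rfl⟩ | ⟨⟨x, y⟩, h, rfl⟩, hA, hB⟩ := hr
  · exact ⟨hE.exists_mem_of_notMem_sources hA h, y, h⟩
  · exact ⟨⟨x, h⟩, hE.exists_mem_of_notMem_sinks hB h⟩

lemma exists_source_linked (hE : IsFlow E A B) (h : (x, y) ∈ E) :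
    ∃ a ∈ A, a ≤ x ∧ Linked E a y := by
  induction hn : #(E.filter (·.2 ≤ y)) using Nat.strong_induction_on generalizing x y with
  | _ n ih =>
  by_cases hA : x ∈ A
  · exact ⟨x, hA, le_rfl, .single (Or.inl h)⟩
  obtain ⟨w, hw⟩ := hE.exists_mem_of_notMem_sources hA h
  have hxy := hE.edge_lt _ h
  have hlt : #(E.filter (·.2 ≤ x)) < n := by
    subst hn
    refine card_lt_card <| (ssubset_iff_of_subset fun e he => ?_).2 ⟨(x, y), ?_, ?_⟩
    · simp only [mem_filter] at he ⊢; exact ⟨he.1, by omega⟩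
    · simp [h]
    · simp; omega
  obtain ⟨a, ha, hax, hlink⟩ := ih _ hlt hw rfl
  exact ⟨a, ha, hax.trans (hE.edge_lt _ hw).le, hlink.tail (Or.inl h)⟩

end IsFlow

def swapHeads (E : FlowGraph) (y y' : ℤ) : FlowGraph :=
  E.map ((Equiv.refl ℤ).prodCongr (Equiv.swap y y')).toEmbedding

section SwapHeads

variable {E : FlowGraph} {A B : Finset ℤ} {x x' y y' : ℤ}

lemma mem_swapHeads {p q : ℤ} : (p, q) ∈ swapHeads E y y' ↔ (p, Equiv.swap y y' q) ∈ E := by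
  simp [swapHeads, mem_map_equiv]

lemma card_beginsAt_swapHeads (r : ℤ) : #(beginsAt (swapHeads E y y') r) = #(beginsAt E r) := by
  simp only [beginsAt, swapHeads, filter_map, card_map]
  rfl

lemma card_endsAt_swapHeads (r : ℤ) :
    #(endsAt (swapHeads E y y') r) = #(endsAt E (Equiv.swap y y' r)) := by
  simp only [endsAt, swapHeads, filter_map, card_map]
  congr 1
  exact filter_congr fun e _ => Equiv.swap_apply_eq_iff

lemma IsFlow.of_card_eq {E' : FlowGraph} (hE : IsFlow E A B) (hlt : ∀ e ∈ E', e.1 < e.2)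
    (hbeg : ∀ r, #(beginsAt E' r) = #(beginsAt E r))
    (hend : ∀ r, #(endsAt E' r) = #(endsAt E r)) : IsFlow E' A B where
  edge_lt := hlt
  disjAB := hE.disjAB
  source_out a ha := (hbeg a).trans (hE.source_out a ha)
  source_in a ha := card_eq_zero.1 <| (hend a).trans (card_eq_zero.2 (hE.source_in a ha))
  sink_in b hb := (hend b).trans (hE.sink_in b hb)
  sink_out b hb := card_eq_zero.1 <| (hbeg b).trans (card_eq_zero.2 (hE.sink_out b hb))
  transit r hA hB := by
    simpa only [← card_eq_zero, hbeg, hend] using hE.transit r hA hB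

lemma transitSet_eq_of_card_eq {E' : FlowGraph}
    (hbeg : ∀ r, #(beginsAt E' r) = #(beginsAt E r))
    (hend : ∀ r, #(endsAt E' r) = #(endsAt E r)) : transitSet E' A B = transitSet E A B := by
  have hfst (F : FlowGraph) (r : ℤ) : r ∈ F.image Prod.fst ↔ 0 < #(beginsAt F r) := by
    simp [card_pos, Finset.Nonempty, mem_beginsAt]
  have hsnd (F : FlowGraph) (r : ℤ) : r ∈ F.image Prod.snd ↔ 0 < #(endsAt F r) := by
    simp [card_pos, Finset.Nonempty, mem_endsAt]
  ext r
  simp only [transitSet, mem_sdiff, mem_union, hfst, hsnd, hbeg, hend]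

lemma IsFlow.card_endsAt_swapHeads (hE : IsFlow E A B) (hy : (x, y) ∈ E) (hy' : (x', y') ∈ E)
    (r : ℤ) : #(endsAt (swapHeads E y y') r) = #(endsAt E r) := by
  rw [_root_.card_endsAt_swapHeads, Equiv.swap_apply_def]
  split_ifs with h h'
  · rw [h, hE.card_endsAt_eq_one hy, hE.card_endsAt_eq_one hy']
  · rw [h', hE.card_endsAt_eq_one hy, hE.card_endsAt_eq_one hy']
  · rfl

lemma IsFlow.isFlow_swapHeads (hE : IsFlow E A B) (hy : (x, y) ∈ E) (hy' : (x', y') ∈ E)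
    (hxy' : x < y') (hx'y : x' < y) : IsFlow (swapHeads E y y') A B := by
  refine hE.of_card_eq (fun ⟨p, q⟩ hpq => ?_) card_beginsAt_swapHeads
    (hE.card_endsAt_swapHeads hy hy')
  rw [mem_swapHeads, Equiv.swap_apply_def] at hpq
  split_ifs at hpq with h h'
  · subst q; rw [(hE.mem_snd_iff hy').1 hpq]; exact hx'y
  · subst q; rw [(hE.mem_snd_iff hy).1 hpq]; exact hxy'
  · exact hE.edge_lt _ hpq

lemma IsFlow.transitSet_swapHeads (hE : IsFlow E A B) (hy : (x, y) ∈ E) (hy' : (x', y') ∈ E) :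
    transitSet (swapHeads E y y') A B = transitSet E A B :=
  transitSet_eq_of_card_eq card_beginsAt_swapHeads (hE.card_endsAt_swapHeads hy hy')

lemma IsFlow.swapHeads_ne (hE : IsFlow E A B) (hy : (x, y) ∈ E) (hy' : (x', y') ∈ E)
    (hx : x' ≠ x) : swapHeads E y y' ≠ E := by
  intro h
  have hxy' : (x, y') ∈ swapHeads E y y' := by
    rw [mem_swapHeads, Equiv.swap_apply_right]; exact hy
  rw [h, hE.mem_fst_iff hy] at hxy'
  exact hx ((hE.mem_snd_iff hy).1 (hxy' ▸ hy'))

lemma IsFlow.erase_erase_subset_swapHeads (hE : IsFlow E A B) (hy : (x, y) ∈ E)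
    (hy' : (x', y') ∈ E) : (E.erase (x, y)).erase (x', y') ⊆ swapHeads E y y' := by
  rintro ⟨p, q⟩ hpq
  simp only [mem_erase, ne_eq] at hpq
  obtain ⟨hne', hne, hpq⟩ := hpq
  rw [mem_swapHeads, Equiv.swap_apply_of_ne_of_ne]
  · exact hpq
  · rintro rfl; exact hne (by rw [(hE.mem_snd_iff hy).1 hpq])
  · rintro rfl; exact hne' (by rw [(hE.mem_snd_iff hy').1 hpq])

end SwapHeads

section L3

variable {E F G : FlowGraph} {A B : Finset ℤ} {c t u : ℤ}

lemma mem_L3g {p q : ℤ} :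
    (p, q) ∈ L3g c F ↔ (p ≠ c ∧ (p, q) ∈ F) ∨ (p = c - 1 ∧ (c, q) ∈ F) := by
  simp only [L3g, mem_image]
  constructor
  · rintro ⟨⟨p', q'⟩, he, h⟩
    split_ifs at h with hp <;> simp_all
  · rintro (⟨hp, h⟩ | ⟨rfl, h⟩)
    · exact ⟨_, h, if_neg hp⟩
    · exact ⟨_, h, if_pos rfl⟩

lemma eq_of_L3g_eq (hF : ∀ q, (c, q) ∈ F ↔ q = t) (hG : ∀ q, (c, q) ∈ G ↔ q = t)
    (hF' : (c - 1, t) ∉ F) (hG' : (c - 1, t) ∉ G) (h : L3g c F = L3g c G) : F = G := by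
  ext ⟨p, q⟩
  have hpq := Finset.ext_iff.1 h (p, q)
  rw [mem_L3g, mem_L3g, hF, hG] at hpq
  by_cases hp : p = c
  · subst p; rw [hF, hG]
  by_cases hp' : p = c - 1 ∧ q = t
  · obtain ⟨rfl, rfl⟩ := hp'; simp [hF', hG']
  · simpa [hp, hp'] using hpq

lemma IsFlow.L3g_swapHeads (hE : IsFlow E A B) (ht : (c, t) ∈ E) (hu : (c - 1, u) ∈ E) :
    L3g c (swapHeads E t u) = L3g c E := by
  ext ⟨p, q⟩
  rw [mem_L3g, mem_L3g, mem_swapHeads, mem_swapHeads, hE.mem_fst_iff ht, hE.mem_fst_iff ht,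
    Equiv.swap_apply_def]
  split_ifs with hqt hqu
  · subst q; simp only [hE.mem_snd_iff hu, hE.mem_snd_iff ht]; grind
  · subst q; simp only [hE.mem_snd_iff hu, hE.mem_snd_iff ht]; grind
  · simp [hqt]

lemma IsFlow.eq_swapHeads_of_L3g_eq (hE : IsFlow E A B) (hF : IsFlow F A B) (hc : c ∈ A)
    (ht : (c, t) ∈ E) (hu : (c - 1, u) ∈ E) (hL : L3g c F = L3g c E) (hne : F ≠ E) :
    F = swapHeads E t u := by
  obtain ⟨t', ht'⟩ := hF.exists_mem_of_mem_sources hc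
  have hF' : (c - 1, t') ∉ F := by rw [hF.mem_snd_iff ht']; omega
  have hmem : (c - 1, t') ∈ L3g c E := hL ▸ mem_L3g.2 (Or.inr ⟨rfl, ht'⟩)
  rcases mem_L3g.1 hmem with ⟨-, h⟩ | ⟨-, h⟩
  · obtain rfl := (hE.mem_fst_iff hu).1 h
    refine eq_of_L3g_eq (fun _ => hF.mem_fst_iff ht') (fun q => ?_) hF' ?_
      (hL.trans (hE.L3g_swapHeads ht hu).symm)
    · rw [mem_swapHeads, hE.mem_fst_iff ht, Equiv.swap_apply_eq_iff, Equiv.swap_apply_left]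
    · rw [mem_swapHeads, Equiv.swap_apply_right, hE.mem_snd_iff ht]; omega
  · obtain rfl := (hE.mem_fst_iff ht).1 h
    exact absurd (eq_of_L3g_eq (fun _ => hF.mem_fst_iff ht') (fun _ => hE.mem_fst_iff ht) hF'
      (by rw [hE.mem_snd_iff ht]; omega) hL) hne

end L3

lemma Equiv.Perm.eq_of_forall_ne_apply_eq {α : Type*} {σ τ : Equiv.Perm α} (x₀ : α)
    (h : ∀ x ≠ x₀, σ x = τ x) : σ = τ := by
  ext x
  obtain hx | rfl := ne_or_eq x x₀
  · exact h x hx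
  by_contra hne
  have hy : τ.symm (σ x) ≠ x := fun hy =>
    hne ((τ.apply_symm_apply (σ x)).symm.trans (congrArg τ hy))
  exact hy (σ.injective (by rw [h _ hy, Equiv.apply_symm_apply]))

namespace IsLinkingPerm

variable {q : ℕ} {E : FlowGraph} {a b : Fin q → ℤ} {σ : Equiv.Perm (Fin q)}

lemma pathEnd_eq (hE : IsFlow E (srcSet a) (srcSet b)) (hσ : IsLinkingPerm E a b σ) (j : Fin q) :
    pathEnd E (a j) = b (σ j) := by
  rw [pathEnd_eq_of_linked hE.injOn_fst hE.edge_lt (hσ j)]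
  exact pathEnd_of_notMem fun _ => hE.notMem_of_mem_sinks (mem_image_of_mem b (mem_univ _))

lemma apply_eq_of_linked (hE : IsFlow E (srcSet a) (srcSet b)) (hb : Function.Injective b)
    (hσ : IsLinkingPerm E a b σ) {j k : Fin q} (h : Linked E (a j) (b k)) : σ j = k := by
  refine hb ?_
  rw [← hσ.pathEnd_eq hE, pathEnd_eq_of_linked hE.injOn_fst hE.edge_lt h]
  exact pathEnd_of_notMem fun _ => hE.notMem_of_mem_sinks (mem_image_of_mem b (mem_univ _))

end IsLinkingPerm

/-- The source `a j₀` whose path runs through `x'` and the source `a j₁` exchange their sinks;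
every other path avoids both exchanged edges. -/
lemma IsFlow.linkingPerm_swapHeads {q : ℕ} {E : FlowGraph} {a b : Fin q → ℤ}
    (hE : IsFlow E (srcSet a) (srcSet b)) (hb : Function.Injective b) {j₁ : Fin q}
    {x' y y' : ℤ} (hy : (a j₁, y) ∈ E) (hy' : (x', y') ∈ E)
    (hx' : x' < a j₁) (hxy' : a j₁ < y')
    (hpred : ∃ s, (s, x') ∈ E) {σ τ : Equiv.Perm (Fin q)} (hσ : IsLinkingPerm E a b σ)
    (hτ : IsLinkingPerm (swapHeads E y y') a b τ) :
    ∃ j₀ ≠ j₁, τ = σ * Equiv.swap j₀ j₁ := by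
  have hE' := hE.isFlow_swapHeads hy hy' hxy' (hx'.trans (hE.edge_lt _ hy))
  set E₁ := E.erase (a j₁, y)
  set D := E₁.erase (x', y')
  have hinj₁ : Set.InjOn Prod.fst (E₁ : Set (ℤ × ℤ)) :=
    hE.injOn_fst.mono (erase_subset _ _)
  have hDE' : D ⊆ swapHeads E y y' := hE.erase_erase_subset_swapHeads hy hy'
  obtain ⟨s, hs⟩ := hpred
  obtain ⟨_, ha₀, hs₀, hlink₀⟩ := hE.exists_source_linked hs
  obtain ⟨j₀, -, rfl⟩ := mem_image.1 ha₀
  have hj₀ : j₀ ≠ j₁ := by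
    rintro rfl; have := hE.edge_lt _ hs; omega
  have hy₁ : pathEnd E y = b (σ j₁) := by
    rw [← hσ.pathEnd_eq hE, pathEnd_eq_of_mem hE.injOn_fst hy (hE.edge_lt _ hy)]
  have hy₀ : pathEnd E y' = b (σ j₀) := by
    rw [← hσ.pathEnd_eq hE, pathEnd_eq_of_linked hE.injOn_fst hE.edge_lt hlink₀,
      pathEnd_eq_of_mem hE.injOn_fst hy' (hE.edge_lt _ hy')]
  have hDy' : pathEnd D y' = b (σ j₀) := by
    rw [pathEnd_erase_of_lt hinj₁ (hE.edge_lt _ hy'), pathEnd_erase_of_lt hE.injOn_fst hxy',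
      hy₀]
  have hτ₁ : τ j₁ = σ j₀ := by
    have hxy' : (a j₁, y') ∈ swapHeads E y y' := by
      rw [mem_swapHeads, Equiv.swap_apply_right]; exact hy
    exact hτ.apply_eq_of_linked hE' hb
      (.head (Or.inl hxy') (hDy' ▸ (linked_pathEnd D y').mono hDE'))
  have hτ_ne (j : Fin q) (h₀ : j ≠ j₀) (h₁ : j ≠ j₁) : τ j = σ j := by
    have hE₁ : pathEnd E₁ (a j) = b (σ j) := by
      rw [← hσ.pathEnd_eq hE]
      refine pathEnd_erase_of_ne hE.injOn_fst hy ?_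
      rw [hσ.pathEnd_eq hE, hy₁]
      exact hb.ne (σ.injective.ne h₁)
    have hD : pathEnd D (a j) = b (σ j) := by
      have hy'₁ : (x', y') ∈ E₁ := mem_erase.2 ⟨by rintro ⟨⟩; omega, hy'⟩
      rw [← hE₁]
      refine pathEnd_erase_of_ne hinj₁ hy'₁ ?_
      rw [hE₁, pathEnd_erase_of_lt hE.injOn_fst hxy', hy₀]
      exact hb.ne (σ.injective.ne h₀)
    exact hτ.apply_eq_of_linked hE' hb (hD ▸ (linked_pathEnd D (a j)).mono hDE')
  refine ⟨j₀, hj₀, Equiv.Perm.eq_of_forall_ne_apply_eq j₀ fun j hj => ?_⟩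
  rw [Equiv.Perm.mul_apply]
  obtain rfl | hj₁ := eq_or_ne j j₁
  · rw [hτ₁, Equiv.swap_apply_right]
  · rw [hτ_ne j hj hj₁, Equiv.swap_apply_of_ne_of_ne hj hj₁]

theorem statement4_general {q : ℕ} (i : ℤ) (a b : Fin (q + 1) → ℤ)
    (hb : StrictAnti b)
    (E : FlowGraph) (hE : InF i a b E)
    (htr : IsTransitPoint E (srcSet a) (srcSet b) (a (Fin.last q) - 1)) :
    (∃! E' : FlowGraph, InF i a b E' ∧ E' ≠ E ∧
        L3g (a (Fin.last q)) E' = L3g (a (Fin.last q)) E) ∧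
    ∀ E' : FlowGraph, InF i a b E' → E' ≠ E →
      L3g (a (Fin.last q)) E' = L3g (a (Fin.last q)) E →
      ∀ σ τ : Equiv.Perm (Fin (q + 1)),
        IsLinkingPerm E a b σ → IsLinkingPerm E' a b τ →
        signValue i b σ E (srcSet a) (srcSet b)
          = - signValue i b τ E' (srcSet a) (srcSet b) := by
  set c := a (Fin.last q)
  obtain ⟨hfl, hbd⟩ := hE
  have hcA : c ∈ srcSet a := mem_image_of_mem a (mem_univ _)
  obtain ⟨t, ht⟩ := hfl.exists_mem_of_mem_sources hcA
  obtain ⟨hpred, u, hu⟩ := hfl.exists_mem_of_mem_transitSet htr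
  have hcu : c < u := lt_of_le_of_ne (Int.sub_one_lt_iff.1 (hfl.edge_lt _ hu))
    (by rintro rfl; exact hfl.notMem_of_mem_sources hcA hu)
  have hflow' := hfl.isFlow_swapHeads ht hu hcu (by have := hfl.edge_lt _ ht; omega)
  have htrans := hfl.transitSet_swapHeads ht hu
  have hunique (F : FlowGraph) (hF : InF i a b F) (hFne : F ≠ E) (hL : L3g c F = L3g c E) :
      F = swapHeads E t u :=
    hfl.eq_swapHeads_of_L3g_eq hF.1 hcA ht hu hL hFne
  have hF' : InF i a b (swapHeads E t u) :=
    ⟨hflow', fun r hr => hbd r (by rwa [IsTransitPoint, ← htrans])⟩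
  refine ⟨⟨swapHeads E t u, ⟨hF', hfl.swapHeads_ne ht hu (by omega), hfl.L3g_swapHeads ht hu⟩,
    fun F hF => hunique F hF.1 hF.2.1 hF.2.2⟩, ?_⟩
  intro F hF hFne hL σ τ hσ hτ
  obtain rfl := hunique F hF hFne hL
  obtain ⟨j₀, hj₀, rfl⟩ :=
    hfl.linkingPerm_swapHeads hb.injective ht hu (by omega) hcu hpred hσ hτ
  simp only [signValue, htrans, Equiv.Perm.sign_mul, Equiv.Perm.sign_swap hj₀]
  push_cast
  ring

/-- Lemma 14 (second part): let `Γ ∈ 𝓕_i(a_1,…,a_q; b_1,…,b_q)`, suppose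
`a_q - 1` is not a source of `Γ` but is a transit point of `Γ` (so `L_3(Γ)` is
not a flow). Then there is exactly one flow `Γ' ∈ 𝓕_i(a_1,…,a_q; b_1,…,b_q)`
distinct from `Γ` with `L_3(Γ') = L_3(Γ)`, and `sgn_i(Γ) = -sgn_i(Γ')`. -/
theorem statement4 {q : ℕ} (i : ℤ) (a b : Fin (q + 1) → ℤ)
    (ha : StrictMono a) (hb : StrictAnti b)
    (hai : ∀ j, a j ≤ i) (hbi : ∀ j, i < b j)
    (E : FlowGraph) (hE : InF i a b E)
    (hns : ∀ j, a j ≠ a (Fin.last q) - 1)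
    (htr : IsTransitPoint E (srcSet a) (srcSet b) (a (Fin.last q) - 1)) :
    (∃! E' : FlowGraph, InF i a b E' ∧ E' ≠ E ∧
        L3g (a (Fin.last q)) E' = L3g (a (Fin.last q)) E) ∧
    ∀ E' : FlowGraph, InF i a b E' → E' ≠ E →
      L3g (a (Fin.last q)) E' = L3g (a (Fin.last q)) E →
      ∀ σ τ : Equiv.Perm (Fin (q + 1)),
        IsLinkingPerm E a b σ → IsLinkingPerm E' a b τ →
        signValue i b σ E (srcSet a) (srcSet b)
          = - signValue i b τ E' (srcSet a) (srcSet b) :=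
  statement4_general i a b hb E hE htr
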